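/- arXiv:2009.11319 — 6 statements merged into one kernel-verified Lean document; each statement's English description precedes it below -/
import Mathlib

section
/- Uniqueness of the Newton–Wigner position among SSC positions that are centres of spin: Let P ∈ ℝ⁴ be future-directed timelike with mc := √(−η(P,P)), let J_{μν} be antisymmetric, and fix τ ∈ ℝ. Suppose χ assigns to every future-directed unit timelike u ∈ ℝ⁴ a point χ(u) ∈ ℝ⁴, continuously in u, such that for every such u: (i) η(u, χ(u)) = −τ; (ii) there exists a future-directed timelike vector f with S_{μν}(χ(u)) f^ν = 0 for all μ (χ(u) lies on an SSC worldline); and (iii) χ(u) − χ^NW(u,τ) ∈ span{u, P} (the centre-of-spin condition). Then χ(u) = χ^NW(u,τ) for all future-directed unit timelike u. -/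
noncomputable section

open scoped BigOperators

/-- The Minkowski bilinear form on `ℝ⁴`, signature `(-+++)`. -/
def mink (x y : Fin 4 → ℝ) : ℝ := -(x 0 * y 0) + x 1 * y 1 + x 2 * y 2 + x 3 * y 3

/-- Lowering (equivalently raising) an index with `η = diag(-1,1,1,1)`. -/
def low (v : Fin 4 → ℝ) : Fin 4 → ℝ := fun μ => if μ = 0 then -(v μ) else v μ

/-- `v` is future-directed timelike. -/
def FDTimelike (v : Fin 4 → ℝ) : Prop := mink v v < 0 ∧ 0 < v 0

/-- `v` is future-directed unit timelike. -/
def FDUnitTimelike (v : Fin 4 → ℝ) : Prop := mink v v = -1 ∧ 0 < v 0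

/-- `mc := √(−η(P,P))`. -/
def mcOf (P : Fin 4 → ℝ) : ℝ := Real.sqrt (-(mink P P))

/-- The spin tensor `S_{μν}(x) = J_{μν} − x_μ P_ν + x_ν P_μ` about the point `x`. -/
def spinTensor (J : Fin 4 → Fin 4 → ℝ) (P x : Fin 4 → ℝ) : Fin 4 → Fin 4 → ℝ :=
  fun μ ν => J μ ν - low x μ * low P ν + low x ν * low P μ

/-- The spin supplementary condition `S_{μν}(x) f^ν = 0` with respect to `f`. -/
def SSC (J : Fin 4 → Fin 4 → ℝ) (P x f : Fin 4 → ℝ) : Prop :=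
  ∀ μ, ∑ ν, spinTensor J P x μ ν * f ν = 0

/-- Lowered components of the Newton–Wigner position observable. -/
def nwLow (J : Fin 4 → Fin 4 → ℝ) (P u : Fin 4 → ℝ) (τ : ℝ) : Fin 4 → ℝ :=
  fun μ =>
    -(∑ ρ, J μ ρ * (u ρ + P ρ / mcOf P)) / (mcOf P - mink u P)
    + τ * low P μ / (-(mink u P))
    - ((∑ l, ∑ ρ, J l ρ * u l * P ρ) / (mcOf P * (mcOf P - mink u P)))
        * low P μ / (-(mink u P))

/-- The Newton–Wigner position observable (as a point of `ℝ⁴`). -/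
def nw (J : Fin 4 → Fin 4 → ℝ) (P u : Fin 4 → ℝ) (τ : ℝ) : Fin 4 → ℝ :=
  low (nwLow J P u τ)
/-!
Contracting the spin supplementary condition `S(x) f = 0` with a vector `c` satisfying
`J c = ρ P♭` and `η(c, P) = 0` gives `η(f, P) (η(c, x) + ρ) = 0`, so every point `x` on an SSC
worldline lies on the hyperplane `η(c, x) = -ρ`; a direct computation puts `χ^NW(u, τ)` there too.
Such a nonzero `c` exists for every antisymmetric `J`: take `c = (⋆J) P♭`, where the dual `⋆J`
satisfies `J ⋆J = -Pf(J) · 1`, and if this vanishes then `Pf(J) = 0` and any nonzero column of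
`⋆J` (or any vector orthogonal to `P♭` when `J = 0`) will do.
The difference `d = χ(u) - χ^NW(u, τ) = a u + b P` then satisfies `η(u, d) = 0` and
`η(c, d) = a η(c, u) = 0`, which forces `d = 0` as soon as `η(c, u) ≠ 0`. Those `u` are dense in
the unit hyperboloid, and both sides are continuous.
-/

open Matrix

section SkewSymmetric

variable {R n : Type*} [CommRing R] {A : Matrix n n R}

theorem apply_eq_neg_of_transpose_eq_neg (hA : Aᵀ = -A) (i j : n) : A i j = -A j i := by
  simpa using congrFun (congrFun hA j) i

theorem dotProduct_mulVec_of_transpose_eq_neg [Fintype n] (hA : Aᵀ = -A) (v w : n → R) :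
    v ⬝ᵥ (A *ᵥ w) = -(w ⬝ᵥ (A *ᵥ v)) := by
  rw [dotProduct_mulVec, ← mulVec_transpose, hA, neg_mulVec, neg_dotProduct, dotProduct_comm]

variable [IsAddTorsionFree R]

theorem apply_self_of_transpose_eq_neg (hA : Aᵀ = -A) (i : n) : A i i = 0 :=
  self_eq_neg.mp (apply_eq_neg_of_transpose_eq_neg hA i i)

theorem dotProduct_mulVec_self_of_transpose_eq_neg [Fintype n] (hA : Aᵀ = -A) (v : n → R) :
    v ⬝ᵥ (A *ᵥ v) = 0 :=
  self_eq_neg.mp (dotProduct_mulVec_of_transpose_eq_neg hA v v)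

end SkewSymmetric

section Pfaffian

variable {R : Type*} [CommRing R]

def pfaffian4 (A : Matrix (Fin 4) (Fin 4) R) : R := A 0 1 * A 2 3 - A 0 2 * A 1 3 + A 0 3 * A 1 2

/-- `(⋆A)_{μν} = ½ ε_{μνρσ} A_{ρσ}`, with `ε_{0123} = 1`. -/
def hodgeDual4 (A : Matrix (Fin 4) (Fin 4) R) : Matrix (Fin 4) (Fin 4) R :=
  !![0, A 2 3, -A 1 3, A 1 2;
     -A 2 3, 0, A 0 3, -A 0 2;
     A 1 3, -A 0 3, 0, A 0 1;
     -A 1 2, A 0 2, -A 0 1, 0]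

theorem hodgeDual4_transpose (A : Matrix (Fin 4) (Fin 4) R) :
    (hodgeDual4 A)ᵀ = -hodgeDual4 A := by
  ext i j; fin_cases i <;> fin_cases j <;> simp [hodgeDual4]

variable [IsAddTorsionFree R] {A : Matrix (Fin 4) (Fin 4) R}

theorem mul_hodgeDual4 (hA : Aᵀ = -A) : A * hodgeDual4 A = -pfaffian4 A • 1 := by
  have h := apply_eq_neg_of_transpose_eq_neg hA
  have d := apply_self_of_transpose_eq_neg hA
  ext i j
  fin_cases i <;> fin_cases j <;>
    simp [hodgeDual4, pfaffian4, mul_apply, Fin.sum_univ_four, d, h 1 0, h 2 0, h 3 0, h 2 1,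
      h 3 1, h 3 2] <;> ring

theorem hodgeDual4_hodgeDual4 (hA : Aᵀ = -A) : hodgeDual4 (hodgeDual4 A) = A := by
  have h := apply_eq_neg_of_transpose_eq_neg hA
  have d := apply_self_of_transpose_eq_neg hA
  ext i j
  fin_cases i <;> fin_cases j <;> simp [hodgeDual4, d, h 1 0, h 2 0, h 3 0, h 2 1, h 3 1, h 3 2]

end Pfaffian

theorem exists_mulVec_eq_smul_of_transpose_eq_neg {J : Matrix (Fin 4) (Fin 4) ℝ} (hJ : Jᵀ = -J)
    {p : Fin 4 → ℝ} (hp : p ≠ 0) : ∃ c ≠ 0, ∃ ρ : ℝ, J *ᵥ c = ρ • p ∧ c ⬝ᵥ p = 0 := by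
  have hJK (v) : J *ᵥ (hodgeDual4 J *ᵥ v) = -pfaffian4 J • v := by
    rw [mulVec_mulVec, mul_hodgeDual4 hJ, smul_mulVec, one_mulVec]
  have hK := hodgeDual4_transpose J
  by_cases hKp : hodgeDual4 J *ᵥ p = 0
  swap
  · refine ⟨_, hKp, _, hJK p, ?_⟩
    rw [dotProduct_comm, dotProduct_mulVec_self_of_transpose_eq_neg hK]
  have hPf : pfaffian4 J = 0 := by
    simpa [hKp, hp] using hJK p
  by_cases hK0 : hodgeDual4 J = 0
  · refine ⟨![p 1, -p 0, p 3, -p 2], ?_, 0, ?_, ?_⟩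
    · intro h
      simp [funext_iff, Fin.forall_fin_succ] at h
      exact hp (by ext i; fin_cases i <;> simp [h])
    · have hJ0 : J = 0 := by
        rw [← hodgeDual4_hodgeDual4 hJ, hK0]
        ext i j; fin_cases i <;> fin_cases j <;> simp [hodgeDual4]
      simp [hJ0]
    · simp [dotProduct, Fin.sum_univ_four]; ring
  · obtain ⟨v, hv⟩ : ∃ v, hodgeDual4 J *ᵥ v ≠ 0 := by
      by_contra! h
      exact hK0 (ext_iff_mulVec.mpr fun v => by rw [h, zero_mulVec])
    refine ⟨_, hv, 0, by simp [hJK, hPf], ?_⟩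
    rw [dotProduct_comm, dotProduct_mulVec_of_transpose_eq_neg hK, hKp, dotProduct_zero, neg_zero]

theorem mink_comm (x y : Fin 4 → ℝ) : mink x y = mink y x := by
  unfold mink; ring

theorem dotProduct_low (x y : Fin 4 → ℝ) : x ⬝ᵥ low y = mink x y := by
  simp [dotProduct, Fin.sum_univ_four, low, mink]

theorem low_low (v : Fin 4 → ℝ) : low (low v) = v := by
  ext μ; by_cases h : μ = 0 <;> simp [low, h]

theorem mink_low (x y : Fin 4 → ℝ) : mink x (low y) = x ⬝ᵥ y := by
  rw [← dotProduct_low, low_low]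

theorem mink_add_right (x y z : Fin 4 → ℝ) : mink x (y + z) = mink x y + mink x z := by
  simp only [mink, Pi.add_apply]; ring

theorem mink_smul_right (x y : Fin 4 → ℝ) (a : ℝ) : mink x (a • y) = a * mink x y := by
  simp only [mink, Pi.smul_apply, smul_eq_mul]; ring

theorem mink_sub_right (x y z : Fin 4 → ℝ) : mink x (y - z) = mink x y - mink x z := by
  simp only [mink, Pi.sub_apply]; ring

theorem mink_smul_add_smul_self (x y : Fin 4 → ℝ) (a b : ℝ) :
    mink (a • x + b • y) (a • x + b • y)
      = a ^ 2 * mink x x + 2 * a * b * mink x y + b ^ 2 * mink y y := by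
  simp only [mink, Pi.add_apply, Pi.smul_apply, smul_eq_mul]; ring

theorem mink_self_nonneg_of_mink_eq_zero {u z : Fin 4 → ℝ} (hu : mink u u < 0)
    (huz : mink u z = 0) : 0 ≤ mink z z := by
  unfold mink at *
  by_contra! hz
  have hdot : u 0 * z 0 = u 1 * z 1 + u 2 * z 2 + u 3 * z 3 := by linarith
  have hsq : (u 0 * z 0) ^ 2 = (u 1 * z 1 + u 2 * z 2 + u 3 * z 3) ^ 2 := by rw [hdot]
  have hu' : 0 < u 0 ^ 2 - (u 1 ^ 2 + u 2 ^ 2 + u 3 ^ 2) := by nlinarith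
  have hz' : 0 < z 0 ^ 2 - (z 1 ^ 2 + z 2 ^ 2 + z 3 ^ 2) := by nlinarith
  have hu₀ : 0 ≤ u 1 ^ 2 + u 2 ^ 2 + u 3 ^ 2 := by positivity
  have hz₀ : 0 ≤ z 1 ^ 2 + z 2 ^ 2 + z 3 ^ 2 := by positivity
  nlinarith [mul_pos hu' hz', mul_nonneg hu₀ hz'.le, mul_nonneg hz₀ hu'.le,
    sq_nonneg (u 1 * z 2 - u 2 * z 1), sq_nonneg (u 1 * z 3 - u 3 * z 1),
    sq_nonneg (u 2 * z 3 - u 3 * z 2)]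

theorem FDTimelike.mink_neg {v w : Fin 4 → ℝ} (hv : FDTimelike v) (hw : FDTimelike w) :
    mink v w < 0 := by
  obtain ⟨hv1, hv2⟩ := hv
  obtain ⟨hw1, hw2⟩ := hw
  unfold mink at *
  nlinarith [sq_nonneg (v 1 * w 2 - v 2 * w 1), sq_nonneg (v 1 * w 3 - v 3 * w 1),
    sq_nonneg (v 2 * w 3 - v 3 * w 2), mul_pos hv2 hw2,
    sq_nonneg (v 0 * w 0 - (v 1 * w 1 + v 2 * w 2 + v 3 * w 3))]

theorem FDUnitTimelike.fdTimelike {u : Fin 4 → ℝ} (hu : FDUnitTimelike u) : FDTimelike u :=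
  ⟨by linarith [hu.1], hu.2⟩

theorem spinTensor_mulVec (J : Matrix (Fin 4) (Fin 4) ℝ) (P x f : Fin 4 → ℝ) :
    spinTensor J P x *ᵥ f = J *ᵥ f - mink f P • low x + mink f x • low P := by
  ext μ
  simp only [spinTensor, mulVec, dotProduct, Fin.sum_univ_four, ← dotProduct_low, Pi.add_apply,
    Pi.sub_apply, Pi.smul_apply, smul_eq_mul]
  ring

theorem mink_eq_of_SSC {J : Matrix (Fin 4) (Fin 4) ℝ} {P c x f : Fin 4 → ℝ} {ρ : ℝ}
    (hJ : Jᵀ = -J) (hc : J *ᵥ c = ρ • low P) (hcP : mink c P = 0) (hf : mink f P ≠ 0)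
    (hx : SSC J P x f) : mink c x = -ρ := by
  have h : c ⬝ᵥ (spinTensor J P x *ᵥ f) = 0 := by
    rw [show spinTensor J P x *ᵥ f = 0 from funext hx, dotProduct_zero]
  simp only [spinTensor_mulVec, dotProduct_add, dotProduct_sub,
    dotProduct_mulVec_of_transpose_eq_neg hJ _ f, hc, dotProduct_smul, dotProduct_low, hcP,
    smul_eq_mul, mul_zero, add_zero] at h
  have : mink f P * (mink c x + ρ) = 0 := by linarith
  linarith [(mul_eq_zero.mp this).resolve_left hf]

theorem mcOf_pos {P : Fin 4 → ℝ} (hP : mink P P < 0) : 0 < mcOf P :=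
  Real.sqrt_pos.mpr (neg_pos.mpr hP)

theorem mcOf_sq {P : Fin 4 → ℝ} (hP : mink P P < 0) : mcOf P ^ 2 = -mink P P :=
  Real.sq_sqrt (neg_nonneg.mpr hP.le)

section NewtonWigner

variable {J : Matrix (Fin 4) (Fin 4) ℝ} {P u : Fin 4 → ℝ} (τ : ℝ)

theorem nwLow_eq :
    nwLow J P u τ = (-(mcOf P - mink u P)⁻¹) • J *ᵥ (u + (mcOf P)⁻¹ • P)
      + ((τ - u ⬝ᵥ J *ᵥ P / (mcOf P * (mcOf P - mink u P))) / -mink u P) • low P := by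
  ext μ
  simp only [nwLow, mulVec, dotProduct, Fin.sum_univ_four, Pi.add_apply, Pi.smul_apply,
    smul_eq_mul]
  ring

theorem mink_nw (v : Fin 4 → ℝ) :
    mink v (nw J P u τ) = -(mcOf P - mink u P)⁻¹ * (v ⬝ᵥ J *ᵥ (u + (mcOf P)⁻¹ • P))
      + (τ - u ⬝ᵥ J *ᵥ P / (mcOf P * (mcOf P - mink u P))) / -mink u P * mink v P := by
  unfold nw
  rw [mink_low, nwLow_eq, dotProduct_add, dotProduct_smul, dotProduct_smul, dotProduct_low,
    smul_eq_mul, smul_eq_mul]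

theorem mink_self_nw (hJ : Jᵀ = -J) (hP : mink P P < 0) (huP : mink u P < 0) :
    mink u (nw J P u τ) = -τ := by
  have hm := (mcOf_pos hP).ne'
  have hden : mcOf P - mink u P ≠ 0 := by linarith [mcOf_pos hP]
  have hu := huP.ne
  rw [mink_nw, mulVec_add, mulVec_smul, dotProduct_add, dotProduct_smul,
    dotProduct_mulVec_self_of_transpose_eq_neg hJ, smul_eq_mul]
  field_simp
  ring

theorem mink_nw_of_mulVec_eq_smul (hJ : Jᵀ = -J) (hP : mink P P < 0) (huP : mink u P < 0)
    {c : Fin 4 → ℝ} {ρ : ℝ} (hc : J *ᵥ c = ρ • low P) (hcP : mink c P = 0) :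
    mink c (nw J P u τ) = -ρ := by
  have hm := (mcOf_pos hP).ne'
  have hden : mcOf P - mink u P ≠ 0 := by linarith [mcOf_pos hP]
  rw [mink_nw, hcP, mul_zero, add_zero, dotProduct_mulVec_of_transpose_eq_neg hJ, hc,
    dotProduct_smul, dotProduct_low, smul_eq_mul]
  have hw : mink (u + (mcOf P)⁻¹ • P) P = mink u P - mcOf P := by
    rw [mink_comm, mink_add_right, mink_smul_right, mink_comm P u, ← neg_neg (mink P P),
      ← mcOf_sq hP]
    field_simp
    ring
  rw [hw]
  field_simp
  ring

theorem continuous_low : Continuous low :=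
  continuous_pi fun μ => by unfold low; split_ifs <;> fun_prop

@[fun_prop]
theorem continuous_mink_left (P : Fin 4 → ℝ) : Continuous fun u => mink u P := by
  unfold mink; fun_prop

theorem continuousOn_nw (hP : mink P P < 0) :
    ContinuousOn (fun u => nw J P u τ) {u | mink u P < 0} := by
  have hm := mcOf_pos hP
  simp only [nw, nwLow_eq]
  refine continuous_low.comp_continuousOn fun u (hu : mink u P < 0) => ?_
  have hden : mcOf P - mink u P ≠ 0 := by linarith
  have : mcOf P * (mcOf P - mink u P) ≠ 0 := mul_ne_zero hm.ne' hden
  have : -mink u P ≠ 0 := neg_ne_zero.mpr hu.ne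
  refine ContinuousAt.continuousWithinAt ?_
  fun_prop (disch := assumption)

end NewtonWigner

theorem eq_zero_of_mem_span_pair_of_mink_eq_zero {u P c d : Fin 4 → ℝ}
    (hd : d ∈ Submodule.span ℝ {u, P}) (huP : mink u P ≠ 0) (hcP : mink c P = 0)
    (hcu : mink c u ≠ 0) (hud : mink u d = 0) (hcd : mink c d = 0) : d = 0 := by
  obtain ⟨a, b, rfl⟩ := Submodule.mem_span_pair.mp hd
  simp only [mink_add_right, mink_smul_right] at hud hcd
  have ha : a = 0 := by simpa [hcP, hcu] using hcd
  have hb : b = 0 := by simpa [ha, huP] using hud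
  simp [ha, hb]

open Filter Topology in
theorem subset_closure_setOf_fdUnitTimelike_mink_ne_zero {c : Fin 4 → ℝ} (hc : c ≠ 0) :
    {u | FDUnitTimelike u} ⊆ closure {u | FDUnitTimelike u ∧ mink c u ≠ 0} := by
  intro u hu
  by_cases hcu : mink c u ≠ 0
  · exact subset_closure ⟨hu, hcu⟩
  rw [not_not] at hcu
  set z := low c + mink u (low c) • u with hz
  have huz : mink u z = 0 := by
    rw [hz, mink_add_right, mink_smul_right, hu.1]; ring
  have hcz : mink c z ≠ 0 := by
    rw [hz, mink_add_right, mink_smul_right, hcu, mul_zero, add_zero, mink_low]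
    simpa using hc
  have hzz : 0 ≤ mink z z := mink_self_nonneg_of_mink_eq_zero (by linarith [hu.1]) huz
  let γ : ℝ → Fin 4 → ℝ := fun t => √(1 + mink z z * t ^ 2) • u + t • z
  have hγ : Tendsto γ (𝓝[≠] 0) (𝓝 u) := by
    have : Continuous γ := by fun_prop
    simpa [γ] using (this.tendsto 0).mono_left nhdsWithin_le_nhds
  refine mem_closure_of_tendsto hγ ?_
  have hpos : ∀ᶠ t in 𝓝[≠] 0, 0 < γ t 0 :=
    ((continuous_apply 0).tendsto u |>.comp hγ).eventually_const_lt hu.2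
  filter_upwards [hpos, self_mem_nhdsWithin] with t ht ht0
  refine ⟨⟨?_, ht⟩, ?_⟩
  · rw [mink_smul_add_smul_self, hu.1, huz, Real.sq_sqrt (by positivity)]; ring
  · rw [mink_add_right, mink_smul_right, mink_smul_right, hcu, mul_zero, zero_add]
    exact mul_ne_zero ht0 hcz

/-- **Uniqueness of the Newton–Wigner position among SSC positions that are centres of spin.**
If `χ` assigns continuously to each future-directed unit timelike `u` a point `χ(u)` on the
hyperplane `{x : η(u,x) = −τ}` which lies on some SSC worldline and for which
`χ(u) − χ^NW(u,τ) ∈ span{u, P}`, then `χ(u) = χ^NW(u,τ)` for all such `u`. -/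
theorem newtonWigner_unique_centre_of_spin
    (P : Fin 4 → ℝ) (hP : FDTimelike P)
    (J : Fin 4 → Fin 4 → ℝ) (hJ : ∀ μ ν, J μ ν = -J ν μ) (τ : ℝ)
    (χ : (Fin 4 → ℝ) → (Fin 4 → ℝ))
    (hcont : ContinuousOn χ {u : Fin 4 → ℝ | FDUnitTimelike u})
    (hplane : ∀ u, FDUnitTimelike u → mink u (χ u) = -τ)
    (hssc : ∀ u, FDUnitTimelike u → ∃ f, FDTimelike f ∧ SSC J P (χ u) f)
    (hcos : ∀ u, FDUnitTimelike u → χ u - nw J P u τ ∈ Submodule.span ℝ ({u, P} : Set (Fin 4 → ℝ))) :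
    ∀ u, FDUnitTimelike u → χ u = nw J P u τ := by
  have hJ' : Jᵀ = -J := by ext μ ν; exact hJ ν μ
  have hlowP : low P ≠ 0 := fun h => hP.2.ne' (by simpa [low] using congrFun h 0)
  obtain ⟨c, hc, ρ, hJc, hcP⟩ := exists_mulVec_eq_smul_of_transpose_eq_neg hJ' hlowP
  rw [dotProduct_low] at hcP
  have hagree : Set.EqOn χ (fun u => nw J P u τ) {u | FDUnitTimelike u ∧ mink c u ≠ 0} := by
    rintro u ⟨hu, hcu⟩
    have huP : mink u P < 0 := hu.fdTimelike.mink_neg hP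
    obtain ⟨f, hf, hfx⟩ := hssc u hu
    refine sub_eq_zero.mp
      (eq_zero_of_mem_span_pair_of_mink_eq_zero (hcos u hu) huP.ne hcP hcu ?_ ?_)
    · rw [mink_sub_right, hplane u hu, mink_self_nw τ hJ' hP.1 huP, sub_self]
    · rw [mink_sub_right, mink_eq_of_SSC hJ' hJc hcP (hf.mink_neg hP).ne hfx,
        mink_nw_of_mulVec_eq_smul τ hJ' hP.1 huP hJc hcP, sub_self]
  have hnw : ContinuousOn (fun u => nw J P u τ) {u | FDUnitTimelike u} :=
    (continuousOn_nw τ hP.1).mono fun u hu => hu.fdTimelike.mink_neg hP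
  exact fun u hu => hagree.of_subset_closure hcont hnw (fun _ hv => hv.1)
    (subset_closure_setOf_fdUnitTimelike_mink_ne_zero hc) hu
end
end

section
/- Classical Newton–Wigner theorem for spin-zero elementary systems: On Γ = ℝ³ × ℝ³ with the canonical Poisson bracket, let X : ℝ³ × ℝ³ → ℝ³ be a C¹ map satisfying (i) {X^a, P_b} = δ^a_b for all a,b; (ii) {J_{ab}, X^c} = δ_a^c X_b − δ_b^c X_a for all a,b,c (X transforms as a position vector under rotations); and (iii) X(x, −p) = X(x, p) for all (x,p) (invariance under time reversal). Then X(x,p) = x for all (x,p) ∈ ℝ³ × ℝ³. (In the spin-zero case, Poisson-commutativity of the components of X is not needed.) -/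
/-!
By (i), `X(x, p) - x` has vanishing `x`-derivative, so `X(x, p) = x + g(p)` with `g(p) = X(0, p)`.
At `x = 0`, relation (ii) says that `Dg(p)(A p) = A g(p)` for the generator `A` of each
coordinate-plane rotation `R_t = exp(tA)`; both `t ↦ g(R_t p)` and `t ↦ R_t g(p)` then solve
`v' = A v` with the same initial value, so `g(R_t p) = R_t g(p)`. If `p` lies in a coordinate
plane, the half-turn of that plane sends `p` to `-p`, and time reversal gives `g(p) = R_π g(p)`,
which kills the two in-plane components of `g(p)`. A point on a coordinate axis lies in two
coordinate planes, so `g` vanishes there, and two plane rotations carry any `p` onto an axis.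
-/

noncomputable section

open scoped BigOperators

/-- The phase space `Γ = ℝ³ × ℝ³` with points `(x, p)`. -/
abbrev Phase := (Fin 3 → ℝ) × (Fin 3 → ℝ)

/-- The canonical Poisson bracket
`{f,g} = Σ_a (∂f/∂x^a · ∂g/∂p_a − ∂f/∂p_a · ∂g/∂x^a)` on `Γ = ℝ³ × ℝ³`. -/
def pb (f g : Phase → ℝ) (z : Phase) : ℝ :=
  ∑ a : Fin 3,
    (fderiv ℝ f z ((Pi.single a 1 : Fin 3 → ℝ), (0 : Fin 3 → ℝ))
        * fderiv ℝ g z ((0 : Fin 3 → ℝ), (Pi.single a 1 : Fin 3 → ℝ))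
      - fderiv ℝ f z ((0 : Fin 3 → ℝ), (Pi.single a 1 : Fin 3 → ℝ))
        * fderiv ℝ g z ((Pi.single a 1 : Fin 3 → ℝ), (0 : Fin 3 → ℝ)))

open Real

lemma apply_eq_add_apply_zero_of_fderiv_inl {E F : Type*}
    [NormedAddCommGroup E] [NormedSpace ℝ E] [NormedAddCommGroup F] [NormedSpace ℝ F]
    {f : E × F → E} (hf : Differentiable ℝ f) (hinl : ∀ z u, fderiv ℝ f z (u, 0) = u)
    (x : E) (p : F) : f (x, p) = x + f (0, p) := by
  have hderiv (y : E) : HasFDerivAt (fun y => f (y, p) - y) (0 : E →L[ℝ] E) y :=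
    (((hf _).hasFDerivAt.comp y (hasFDerivAt_prodMk_left y p)).sub
      (hasFDerivAt_id y)).congr_fderiv (by ext u; simp [hinl])
  have hconst := is_const_of_fderiv_eq_zero (fun y => (hderiv y).differentiableAt)
    (fun y => (hderiv y).fderiv) x 0
  simp only [sub_zero] at hconst
  rw [← hconst]
  abel

lemma forall_of_plane_cases {ι : Type*} (a b : ι) {P : ι → Prop} (ha : P a) (hb : P b)
    (hrest : ∀ i, i ≠ a → i ≠ b → P i) (i : ι) : P i := by
  rcases eq_or_ne i a with rfl | hia
  · exact ha
  rcases eq_or_ne i b with rfl | hib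
  · exact hb
  exact hrest i hia hib

section PlaneRotation

variable {ι : Type*} [DecidableEq ι] (a b : ι)

def planeRot (t : ℝ) (v : ι → ℝ) : ι → ℝ :=
  fun i => if i = a then cos t * v a - sin t * v b
    else if i = b then sin t * v a + cos t * v b else v i

def planeRotGen : (ι → ℝ) →L[ℝ] (ι → ℝ) :=
  (ContinuousLinearMap.proj a).smulRight (Pi.single b 1)
    - (ContinuousLinearMap.proj b).smulRight (Pi.single a 1)

variable {a b}

lemma planeRot_apply_left (t : ℝ) (v : ι → ℝ) : planeRot a b t v a = cos t * v a - sin t * v b :=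
  if_pos rfl

lemma planeRot_apply_right (hab : a ≠ b) (t : ℝ) (v : ι → ℝ) :
    planeRot a b t v b = sin t * v a + cos t * v b := by
  simp [planeRot, hab.symm]

lemma planeRot_apply_of_ne {i : ι} (hia : i ≠ a) (hib : i ≠ b) (t : ℝ) (v : ι → ℝ) :
    planeRot a b t v i = v i := by
  simp [planeRot, hia, hib]

lemma planeRotGen_apply_left (hab : a ≠ b) (v : ι → ℝ) : planeRotGen a b v a = -v b := by
  simp [planeRotGen, hab]

lemma planeRotGen_apply_right (hab : a ≠ b) (v : ι → ℝ) : planeRotGen a b v b = v a := by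
  simp [planeRotGen, hab.symm]

lemma planeRotGen_apply_of_ne {i : ι} (hia : i ≠ a) (hib : i ≠ b) (v : ι → ℝ) :
    planeRotGen a b v i = 0 := by
  simp [planeRotGen, hia, hib]

lemma planeRot_zero_left (hab : a ≠ b) (v : ι → ℝ) : planeRot a b 0 v = v :=
  funext <| forall_of_plane_cases a b (by simp [planeRot_apply_left])
    (by simp [planeRot_apply_right hab]) fun _ hia hib => planeRot_apply_of_ne hia hib 0 v

lemma planeRot_zero_right (t : ℝ) : planeRot a b t (0 : ι → ℝ) = 0 := by
  ext i
  simp [planeRot]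

lemma planeRot_pi_of_mem_plane (hab : a ≠ b) {v : ι → ℝ} (hv : ∀ i, i ≠ a → i ≠ b → v i = 0) :
    planeRot a b π v = -v :=
  funext <| forall_of_plane_cases a b (by simp [planeRot_apply_left])
    (by simp [planeRot_apply_right hab]) fun i hia hib => by
      simp [planeRot_apply_of_ne hia hib, hv i hia hib]

lemma hasDerivAt_planeRot (hab : a ≠ b) (v : ι → ℝ) (t : ℝ) :
    HasDerivAt (fun t => planeRot a b t v) (planeRotGen a b (planeRot a b t v)) t := by
  rw [hasDerivAt_pi]
  refine forall_of_plane_cases a b ?_ ?_ fun i hia hib => ?_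
  · simp only [planeRot_apply_left, planeRotGen_apply_left hab, planeRot_apply_right hab]
    exact ((hasDerivAt_cos t).mul_const (v a) |>.sub
      ((hasDerivAt_sin t).mul_const (v b))).congr_deriv (by ring)
  · simp only [planeRot_apply_right hab, planeRotGen_apply_right hab, planeRot_apply_left]
    exact ((hasDerivAt_sin t).mul_const (v a) |>.add
      ((hasDerivAt_cos t).mul_const (v b))).congr_deriv (by ring)
  · simp only [planeRot_apply_of_ne hia hib, planeRotGen_apply_of_ne hia hib]
    exact hasDerivAt_const t (v i)

lemma map_planeRot_of_fderiv_planeRotGen [Fintype ι] (hab : a ≠ b) {g : (ι → ℝ) → ι → ℝ}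
    (hg : Differentiable ℝ g)
    (hgen : ∀ p, fderiv ℝ g p (planeRotGen a b p) = planeRotGen a b (g p))
    (t : ℝ) (p : ι → ℝ) :
    g (planeRot a b t p) = planeRot a b t (g p) := by
  have hsol (t : ℝ) : HasDerivAt (fun t => g (planeRot a b t p))
      (planeRotGen a b (g (planeRot a b t p))) t := by
    rw [← hgen]
    exact (hg _).hasFDerivAt.comp_hasDerivAt t (hasDerivAt_planeRot hab p t)
  have huniq := ODE_solution_unique_univ (v := fun _ => planeRotGen a b)
    (s := fun _ => Set.univ) (t₀ := 0)
    (f := fun t => g (planeRot a b t p)) (g := fun t => planeRot a b t (g p))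
    (fun _ => (planeRotGen a b).lipschitz.lipschitzOnWith) (fun t => ⟨hsol t, trivial⟩)
    (fun t => ⟨hasDerivAt_planeRot hab (g p) t, trivial⟩) (by simp [planeRot_zero_left hab])
  exact congrFun huniq t

lemma apply_eq_zero_of_mem_plane (hab : a ≠ b) {g : (ι → ℝ) → ι → ℝ}
    (hequiv : ∀ t p, g (planeRot a b t p) = planeRot a b t (g p)) (heven : ∀ p, g (-p) = g p)
    {v : ι → ℝ} (hv : ∀ i, i ≠ a → i ≠ b → v i = 0) : g v a = 0 ∧ g v b = 0 := by
  have h : g v = planeRot a b π (g v) := by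
    rw [← hequiv, planeRot_pi_of_mem_plane hab hv, heven]
  have ha := congrFun h a
  have hb := congrFun h b
  rw [planeRot_apply_left, cos_pi, sin_pi] at ha
  rw [planeRot_apply_right hab, cos_pi, sin_pi] at hb
  constructor <;> linarith

lemma exists_planeRot_eq (hab : a ≠ b) (v : ι → ℝ) :
    ∃ t w, planeRot a b t w = v ∧ w b = 0 ∧ ∀ i, i ≠ a → i ≠ b → w i = v i := by
  obtain ⟨z, hza, hzb⟩ : ∃ z : ℂ, z.re = v a ∧ z.im = v b := ⟨⟨v a, v b⟩, rfl, rfl⟩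
  refine ⟨z.arg, fun i => if i = a then ‖z‖ else if i = b then 0 else v i, ?_,
    by simp [hab.symm], fun i hia hib => by simp [hia, hib]⟩
  refine funext <| forall_of_plane_cases a b ?_ ?_ fun i hia hib => ?_
  · simp [planeRot_apply_left, Complex.norm_mul_cos_arg, mul_comm, hab.symm, hza]
  · simp [planeRot_apply_right hab, Complex.norm_mul_sin_arg, mul_comm, hab.symm, hzb]
  · simp [planeRot_apply_of_ne hia hib, hia, hib]

end PlaneRotation

theorem eq_zero_of_map_planeRot_of_even {g : (Fin 3 → ℝ) → Fin 3 → ℝ}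
    (hequiv : ∀ a b : Fin 3, a ≠ b → ∀ t p, g (planeRot a b t p) = planeRot a b t (g p))
    (heven : ∀ p, g (-p) = g p) (q : Fin 3 → ℝ) : g q = 0 := by
  obtain ⟨t₁, w₁, rfl, hw₁, -⟩ := exists_planeRot_eq (a := 1) (b := 2) (by decide) q
  obtain ⟨t₂, w, rfl, hw1, hw2⟩ := exists_planeRot_eq (a := 0) (b := 1) (by decide) w₁
  have hw : ∀ i, i ≠ 0 → w i = 0 := by
    intro i hi
    fin_cases i
    · exact absurd rfl hi
    · exact hw1
    · exact (hw2 2 (by decide) (by decide)).trans hw₁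
  obtain ⟨hg0, hg1⟩ := apply_eq_zero_of_mem_plane (by decide) (hequiv 0 1 (by decide)) heven
    (fun i hi _ => hw i hi)
  obtain ⟨-, hg2⟩ := apply_eq_zero_of_mem_plane (by decide) (hequiv 0 2 (by decide)) heven
    (fun i hi _ => hw i hi)
  have hgw : g w = 0 := by
    ext i
    fin_cases i <;> assumption
  rw [hequiv 1 2 (by decide), hequiv 0 1 (by decide), hgw, planeRot_zero_right, planeRot_zero_right]

lemma pb_momentum (f : Phase → ℝ) (b : Fin 3) (z : Phase) :
    pb f (fun w => w.2 b) z = fderiv ℝ f z (Pi.single b 1, 0) := by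
  have hp := hasFDerivAt_pi'.1 (hasFDerivAt_snd (𝕜 := ℝ) (p := z)) b
  simp [pb, hp.fderiv, Pi.single_apply]

lemma pb_angularMomentum_zero_fst (h : Phase → ℝ) (a b : Fin 3) (q : Fin 3 → ℝ) :
    pb (fun w => w.1 a * w.2 b - w.1 b * w.2 a) h (0, q)
      = q b * fderiv ℝ h (0, q) (0, Pi.single a 1)
        - q a * fderiv ℝ h (0, q) (0, Pi.single b 1) := by
  have hx (i : Fin 3) := hasFDerivAt_pi'.1 (hasFDerivAt_fst (𝕜 := ℝ) (p := ((0, q) : Phase))) i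
  have hp (i : Fin 3) := hasFDerivAt_pi'.1 (hasFDerivAt_snd (𝕜 := ℝ) (p := ((0, q) : Phase))) i
  have hJ : HasFDerivAt (fun w : Phase => w.1 a * w.2 b - w.1 b * w.2 a) _ (0, q) :=
    ((hx a).mul (hp b)).sub ((hx b).mul (hp a))
  simp [pb, hJ.fderiv, Pi.single_apply, sub_mul, Finset.sum_sub_distrib]

lemma fderiv_apply_inl_of_pb_momentum {X : Phase → Fin 3 → ℝ} (hX : Differentiable ℝ X)
    (htrans : ∀ a b : Fin 3, ∀ z : Phase,
      pb (fun w => X w a) (fun w => w.2 b) z = if a = b then 1 else 0)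
    (z : Phase) (u : Fin 3 → ℝ) : fderiv ℝ X z (u, 0) = u := by
  have hbasis (b : Fin 3) : fderiv ℝ X z (Pi.single b 1, 0) = Pi.single b 1 := by
    ext a
    have h := htrans a b z
    rw [pb_momentum, fderiv_apply (hX z)] at h
    simpa [Pi.single_apply] using h
  have hcomp :
      (fderiv ℝ X z).comp (ContinuousLinearMap.inl ℝ _ _) = ContinuousLinearMap.id ℝ _ :=
    ContinuousLinearMap.coe_injective <|
      (Pi.basisFun ℝ (Fin 3)).ext fun b => by simpa using hbasis b
  simpa using congrArg (· u) hcomp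

lemma fderiv_momentum_planeRotGen_of_pb_angularMomentum {X : Phase → Fin 3 → ℝ}
    (hX : Differentiable ℝ X)
    (hrot : ∀ a b c : Fin 3, ∀ z : Phase,
      pb (fun w => w.1 a * w.2 b - w.1 b * w.2 a) (fun w => X w c) z
        = (if a = c then X z b else 0) - (if b = c then X z a else 0))
    (a b : Fin 3) (q : Fin 3 → ℝ) :
    fderiv ℝ (fun p => X (0, p)) q (planeRotGen a b q) = planeRotGen a b (X (0, q)) := by
  have hinr : fderiv ℝ (fun p => X (0, p)) q
      = (fderiv ℝ X (0, q)).comp (ContinuousLinearMap.inr ℝ _ _) :=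
    ((hX _).hasFDerivAt.comp q (hasFDerivAt_prodMk_right 0 q)).fderiv
  ext c
  have h := hrot a b c (0, q)
  rw [pb_angularMomentum_zero_fst, fderiv_apply (hX _)] at h
  simp only [planeRotGen, sub_apply, ContinuousLinearMap.smulRight_apply,
    map_sub, map_smul, hinr] at h ⊢
  simp only [ContinuousLinearMap.comp_apply, ContinuousLinearMap.proj_apply,
    ContinuousLinearMap.inr_apply, Pi.sub_apply, Pi.smul_apply, smul_eq_mul, Pi.single_apply,
    @eq_comm _ c, mul_ite, mul_one, mul_zero] at h ⊢
  linarith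

/-- **Classical Newton–Wigner theorem for spin-zero elementary systems**: a `C¹` map
`X : ℝ³ × ℝ³ → ℝ³` satisfying the canonical Poisson relations with the translation generators,
transforming as a position vector under rotations, and invariant under time reversal, is the
canonical position `X(x,p) = x`. -/
theorem classical_newton_wigner_spin_zero
    (X : Phase → Fin 3 → ℝ) (hC1 : ContDiff ℝ 1 X)
    (htrans : ∀ a b : Fin 3, ∀ z : Phase,
      pb (fun w => X w a) (fun w => w.2 b) z = if a = b then 1 else 0)
    (hrot : ∀ a b c : Fin 3, ∀ z : Phase,
      pb (fun w => w.1 a * w.2 b - w.1 b * w.2 a) (fun w => X w c) z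
        = (if a = c then X z b else 0) - (if b = c then X z a else 0))
    (hT : ∀ x p : Fin 3 → ℝ, X (x, -p) = X (x, p)) :
    ∀ z : Phase, X z = z.1 := by
  have hX : Differentiable ℝ X := hC1.differentiable one_ne_zero
  have hmomentum : ∀ p, X (0, p) = 0 := by
    refine eq_zero_of_map_planeRot_of_even (fun a b hab => ?_) (hT 0)
    exact map_planeRot_of_fderiv_planeRotGen hab
      (hX.comp ((differentiable_const 0).prodMk differentiable_id))
      (fderiv_momentum_planeRotGen_of_pb_angularMomentum hX hrot a b)
  rintro ⟨x, p⟩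
  rw [apply_eq_add_apply_zero_of_fderiv_inl hX (fderiv_apply_inl_of_pb_momentum hX htrans),
    hmomentum, add_zero]
end
end

section
/- The Newton–Wigner position observable satisfies the Newton–Wigner spin supplementary condition and lies on the prescribed hyperplane: for every future-directed unit timelike u ∈ ℝ⁴ and every τ ∈ ℝ, the point χ := χ^NW(u,τ) satisfies η(u, χ) = −τ and (J_{μν} − χ_μP_ν + χ_νP_μ)(u^ν + P^ν/(mc)) = 0 for all μ. In particular, χ^NW(u,τ) − χ^NW(u,τ) = 0 ∈ span{u,P}, so the Newton–Wigner position observable is a centre of spin. -/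
noncomputable section

open scoped BigOperators

set_option maxHeartbeats 1000000 in
/-- **The Newton–Wigner position observable satisfies the Newton–Wigner SSC and lies on the
prescribed hyperplane**: for every future-directed unit timelike `u` and every `τ`, the point
`χ := χ^NW(u,τ)` satisfies `η(u,χ) = −τ` and `S_{μν}(χ)(u^ν + P^ν/(mc)) = 0`; in particular
`χ^NW(u,τ) − χ^NW(u,τ) = 0 ∈ span{u,P}`, so `χ^NW` is a centre of spin. -/
theorem newtonWigner_satisfies_NW_SSC
    (P : Fin 4 → ℝ) (hP : FDTimelike P)
    (J : Fin 4 → Fin 4 → ℝ) (hJ : ∀ μ ν, J μ ν = -J ν μ)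
    (u : Fin 4 → ℝ) (hu : FDUnitTimelike u) (τ : ℝ) :
    mink u (nw J P u τ) = -τ ∧
    (∀ μ, ∑ ν, spinTensor J P (nw J P u τ) μ ν * (u ν + P ν / mcOf P) = 0) ∧
    nw J P u τ - nw J P u τ ∈ Submodule.span ℝ ({u, P} : Set (Fin 4 → ℝ)) := by
  obtain ⟨hPP, hP0⟩ := hP
  obtain ⟨huu, hu0⟩ := hu
  have hJd : ∀ i, J i i = 0 := fun i => by have := hJ i i; linarith
  set m := mcOf P with hmdef
  have hm2 : m ^ 2 = -(mink P P) := Real.sq_sqrt (by linarith)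
  have hmpos : 0 < m := Real.sqrt_pos.mpr (by linarith)
  have hmne : m ≠ 0 := ne_of_gt hmpos
  set b := mink u P with hbdef
  have hb : b < 0 := by
    have hcs : (u 1 * P 1 + u 2 * P 2 + u 3 * P 3) ^ 2 ≤
        (u 1 ^ 2 + u 2 ^ 2 + u 3 ^ 2) * (P 1 ^ 2 + P 2 ^ 2 + P 3 ^ 2) := by
      nlinarith [sq_nonneg (u 1 * P 2 - u 2 * P 1), sq_nonneg (u 1 * P 3 - u 3 * P 1),
        sq_nonneg (u 2 * P 3 - u 3 * P 2)]
    have h1 : (0:ℝ) < u 0 * P 0 := mul_pos hu0 hP0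
    simp only [hbdef, mink] at huu hPP ⊢
    nlinarith [sq_nonneg (P 1), sq_nonneg (P 2), sq_nonneg (P 3),
      sq_nonneg (u 1), sq_nonneg (u 2), sq_nonneg (u 3), h1, hcs,
      sq_nonneg (u 1 * P 1 + u 2 * P 2 + u 3 * P 3)]
  have hbne : b ≠ 0 := ne_of_lt hb
  have hDne : m - b ≠ 0 := ne_of_gt (by linarith)
  have hll : ∀ x : Fin 4 → ℝ, low (low x) = x := by
    intro x; funext μ; by_cases h : μ = 0 <;> simp [low, h]
  set C := ∑ l, ∑ ρ, J l ρ * u l * P ρ with hCdef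
  set A : Fin 4 → ℝ := fun μ => ∑ ρ, J μ ρ * (u ρ + P ρ / m) with hAdef
  have hnw : ∀ μ, nwLow J P u τ μ =
      -(A μ) / (m - b) + τ * low P μ / (-b) - (C / (m * (m - b))) * low P μ / (-b) := by
    intro μ
    simp only [nwLow, hAdef, hCdef, ← hmdef, ← hbdef]
  have huP : ∑ ν, u ν * low P ν = b := by
    simp [Fin.sum_univ_four, low, hbdef, mink]
    try ring
  have hAu : ∑ ν, u ν * A ν = C / m := by
    simp only [hAdef, hCdef, Fin.sum_univ_four]
    rw [hJd 0, hJd 1, hJd 2, hJd 3, hJ 1 0, hJ 2 0, hJ 3 0, hJ 2 1, hJ 3 1, hJ 3 2]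
    field_simp
    ring
  have hPm : -(P 0 ^ 2) + P 1 ^ 2 + P 2 ^ 2 + P 3 ^ 2 = -(m ^ 2) := by
    simp only [mink] at hm2; linarith
  have hPf : ∑ ν, low P ν * (u ν + P ν / m) = b - m := by
    have e : ∑ ν, low P ν * (u ν + P ν / m)
        = (-(u 0 * P 0) + u 1 * P 1 + u 2 * P 2 + u 3 * P 3)
          + (-(P 0 ^ 2) + P 1 ^ 2 + P 2 ^ 2 + P 3 ^ 2) / m := by
      simp [Fin.sum_univ_four, low]
      try ring
    rw [e, hPm, hbdef]
    simp only [mink]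
    field_simp
    try ring
  have hAf : ∑ ν, A ν * (u ν + P ν / m) = 0 := by
    simp only [hAdef, Fin.sum_univ_four]
    rw [hJd 0, hJd 1, hJd 2, hJd 3, hJ 1 0, hJ 2 0, hJ 3 0, hJ 2 1, hJ 3 1, hJ 3 2]
    ring
  have hχf : ∑ ν, nwLow J P u τ ν * (u ν + P ν / m) = τ * (m - b) / b - C / (m * b) := by
    have step : ∑ ν, nwLow J P u τ ν * (u ν + P ν / m) =
        -(∑ ν, A ν * (u ν + P ν / m)) / (m - b)
        + τ * (∑ ν, low P ν * (u ν + P ν / m)) / (-b)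
        - (C / (m * (m - b))) * (∑ ν, low P ν * (u ν + P ν / m)) / (-b) := by
      simp only [hnw, Fin.sum_univ_four]; ring
    rw [step, hAf, hPf]
    field_simp
    ring
  refine ⟨?_, ?_, ?_⟩
  · have hml : mink u (nw J P u τ) = ∑ ν, u ν * nwLow J P u τ ν := by
      simp [nw, mink, low, Fin.sum_univ_four]
      try ring
    rw [hml]
    have step : ∑ ν, u ν * nwLow J P u τ ν =
        -(∑ ν, u ν * A ν) / (m - b)
        + τ * (∑ ν, u ν * low P ν) / (-b)
        - (C / (m * (m - b))) * (∑ ν, u ν * low P ν) / (-b) := by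
      simp only [hnw, Fin.sum_univ_four]; ring
    rw [step, hAu, huP, div_neg, div_neg, mul_div_assoc, div_self hbne, mul_div_assoc,
      div_self hbne, neg_div, div_div]
    ring
  · intro μ
    have hexp : ∑ ν, spinTensor J P (nw J P u τ) μ ν * (u ν + P ν / m) =
        A μ - nwLow J P u τ μ * (∑ ν, low P ν * (u ν + P ν / m))
        + low P μ * (∑ ν, nwLow J P u τ ν * (u ν + P ν / m)) := by
      simp only [spinTensor, nw, hll, hAdef, Fin.sum_univ_four]; ring
    rw [hexp, hPf, hχf, hnw μ, div_neg, div_neg]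
    field_simp
    ring
  · simp only [sub_self]
    exact Submodule.zero_mem _
end
end

section
/- The SSC worldline: Let P ∈ ℝ⁴ be future-directed timelike, J_{μν} antisymmetric, and f ∈ ℝ⁴ future-directed timelike (so that η(f,P) < 0, in particular f·P ≠ 0). Then the solution set of the spin supplementary condition with respect to f, {x ∈ ℝ⁴ : (J_{μν} − x_μP_ν + x_νP_μ) f^ν = 0 for all μ}, equals the straight line {x ∈ ℝ⁴ : x_μ = J_{μρ}f^ρ/(f·P) + λ P_μ for some λ ∈ ℝ} with tangent P. -/
noncomputable section

open scoped BigOperators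

lemma mink_neg_of_FDTimelike (P f : Fin 4 → ℝ) (hP : FDTimelike P) (hf : FDTimelike f) :
    mink f P < 0 := by
  obtain ⟨hP1, hP2⟩ := hP
  obtain ⟨hf1, hf2⟩ := hf
  unfold mink at *
  nlinarith [sq_nonneg (f 1 * P 2 - f 2 * P 1), sq_nonneg (f 1 * P 3 - f 3 * P 1),
    sq_nonneg (f 2 * P 3 - f 3 * P 2), mul_pos hf2 hP2,
    sq_nonneg (f 1 * P 1 + f 2 * P 2 + f 3 * P 3),
    sq_nonneg (f 0 * P 0 - f 1 * P 1 - f 2 * P 2 - f 3 * P 3),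
    sq_nonneg (f 0 * P 0 + f 1 * P 1 + f 2 * P 2 + f 3 * P 3)]

lemma ssc_expand (J : Fin 4 → Fin 4 → ℝ) (P x f : Fin 4 → ℝ) (μ : Fin 4) :
    (∑ ν, spinTensor J P x μ ν * f ν)
      = (∑ ρ, J μ ρ * f ρ) - low x μ * mink f P + low P μ * mink x f := by
  simp only [spinTensor, mink, low, Fin.sum_univ_four,
    show ((1 : Fin 4) = 0) = False by simp, show ((2 : Fin 4) = 0) = False by simp,
    show ((3 : Fin 4) = 0) = False by simp, if_true, if_false, ite_true, ite_false]
  ring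

/-- **The SSC worldline**: for future-directed timelike `P` and `f` and antisymmetric `J`, the
solution set of the spin supplementary condition with respect to `f` is the straight line
`{x : x_μ = J_{μρ}f^ρ/(f·P) + λP_μ}` with tangent `P`. -/
theorem ssc_worldline
    (P : Fin 4 → ℝ) (hP : FDTimelike P)
    (J : Fin 4 → Fin 4 → ℝ) (hJ : ∀ μ ν, J μ ν = -J ν μ)
    (f : Fin 4 → ℝ) (hf : FDTimelike f) :
    {x : Fin 4 → ℝ | SSC J P x f}
      = {x : Fin 4 → ℝ | ∃ l : ℝ, ∀ μ,
          low x μ = (∑ ρ, J μ ρ * f ρ) / mink f P + l * low P μ} := by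
  have hfP : mink f P < 0 := mink_neg_of_FDTimelike P f hP hf
  have hne : mink f P ≠ 0 := ne_of_lt hfP
  ext x
  simp only [Set.mem_setOf_eq]
  constructor
  · intro h
    refine ⟨mink x f / mink f P, fun μ => ?_⟩
    have hμ := h μ
    rw [ssc_expand] at hμ
    field_simp
    linear_combination -hμ
  · rintro ⟨l, hx⟩
    unfold SSC
    intro μ'
    have hsum0 : ∑ ν, (∑ ρ, J ν ρ * f ρ) * f ν = 0 := by
      simp only [Fin.sum_univ_four]
      linear_combination (f 0 * f 0 / 2) * hJ 0 0 + (f 1 * f 1 / 2) * hJ 1 1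
        + (f 2 * f 2 / 2) * hJ 2 2 + (f 3 * f 3 / 2) * hJ 3 3
        + (f 0 * f 1) * hJ 0 1 + (f 0 * f 2) * hJ 0 2 + (f 0 * f 3) * hJ 0 3
        + (f 1 * f 2) * hJ 1 2 + (f 1 * f 3) * hJ 1 3 + (f 2 * f 3) * hJ 2 3
    have hxf : mink x f = l * mink f P := by
      have h0 := hx 0
      have h1 := hx 1
      have h2 := hx 2
      have h3 := hx 3
      simp only [low, Fin.sum_univ_four,
        show ((1 : Fin 4) = 0) = False by simp, show ((2 : Fin 4) = 0) = False by simp,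
        show ((3 : Fin 4) = 0) = False by simp, if_true, if_false, ite_true,
        ite_false] at h0 h1 h2 h3
      simp only [Fin.sum_univ_four] at hsum0
      unfold mink
      linear_combination f 0 * h0 + f 1 * h1 + f 2 * h2 + f 3 * h3 + hsum0 / mink f P
    rw [ssc_expand, hx μ', hxf]
    field_simp
    ring
end
end

section
/- A translation-invariant, rotation-covariant, time-reversal-invariant vector-valued observable has no component along the momentum (spin-zero case): Let A : ℝ³ × ℝ³ → ℝ³ be C¹ and satisfy (i) {P_a, A^b} = 0 for all a,b (invariance under spatial translations); (ii) {J_{ab}, A^c} = δ_a^c A_b − δ_b^c A_a for all a,b,c (A transforms as a vector under rotations); and (iii) A(x, −p) = A(x, p) for all (x,p) (invariance under time reversal). Then A(x,p) · p = 0 for all (x,p) ∈ ℝ³ × ℝ³. -/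
noncomputable section

open scoped BigOperators

/-!
Let `S = A · p`. By the Leibniz rule, `S` inherits translation invariance from `A`, and the
rotation covariance of `A` cancels against that of `p`, so `{P_a, S} = {J_ab, S} = 0`. The first
says `S` does not depend on `x`; the second then reads `p_b ∂S/∂p_a = p_a ∂S/∂p_b`, i.e. the
momentum gradient of `S` is parallel to `p`. Hence `S` is constant along any great circle of the
momentum sphere, in particular along one joining `p` to `-p`, so `S` is even in `p`. Time reversal
makes `S` odd in `p`, hence `S = 0`.
-/

theorem LinearMap.apply_eq_zero_of_dotProduct_eq_zero {K ι : Type*} [Field K] [Fintype ι]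
    [DecidableEq ι] (L : (ι → K) →ₗ[K] K) {p v : ι → K}
    (hL : ∀ a b, p b * L (Pi.single a 1) = p a * L (Pi.single b 1))
    (hp : p ≠ 0) (hv : p ⬝ᵥ v = 0) : L v = 0 := by
  obtain ⟨c, hc⟩ : ∃ c, p c ≠ 0 := Function.ne_iff.mp hp
  have hbasis : ∀ a : ι, (fun j => if a = j then (1 : K) else 0) = Pi.single a 1 := fun a =>
    funext fun j => by simp [Pi.single_apply, eq_comm]
  have : p c * L v = (p ⬝ᵥ v) * L (Pi.single c 1) := by
    simp only [L.pi_apply_eq_sum_univ v, hbasis, Finset.mul_sum, dotProduct, Finset.sum_mul]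
    refine Finset.sum_congr rfl fun a _ => ?_
    linear_combination v a * hL a c
  simpa [hv, hc] using this

theorem apply_neg_eq_of_fderiv_orthogonal_eq_zero {ι : Type*} [Fintype ι]
    {f : (ι → ℝ) → ℝ} (hf : Differentiable ℝ f)
    (hf' : ∀ q ≠ 0, ∀ v, q ⬝ᵥ v = 0 → fderiv ℝ f q v = 0)
    {p u : ι → ℝ} (hpu : p ⬝ᵥ u = 0) (huu : u ⬝ᵥ u = p ⬝ᵥ p) : f (-p) = f p := by
  rcases eq_or_ne p 0 with rfl | hp
  · rw [neg_zero]
  set γ : ℝ → ι → ℝ := fun θ => Real.cos θ • p + Real.sin θ • u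
  set γ' : ℝ → ι → ℝ := fun θ => -Real.sin θ • p + Real.cos θ • u
  have hγ : ∀ θ, HasDerivAt γ (γ' θ) θ := fun θ =>
    ((Real.hasDerivAt_cos θ).smul_const p).add ((Real.hasDerivAt_sin θ).smul_const u)
  have hγγ : ∀ θ, γ θ ⬝ᵥ γ θ = p ⬝ᵥ p := fun θ => by
    simp only [γ, add_dotProduct, dotProduct_add, smul_dotProduct, dotProduct_smul,
      dotProduct_comm u p, hpu, huu, smul_eq_mul]
    linear_combination (p ⬝ᵥ p) * Real.sin_sq_add_cos_sq θ
  have hγγ' : ∀ θ, γ θ ⬝ᵥ γ' θ = 0 := fun θ => by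
    simp only [γ, γ', add_dotProduct, dotProduct_add, smul_dotProduct, dotProduct_smul,
      dotProduct_comm u p, hpu, huu, smul_eq_mul]
    ring
  have hγ_ne : ∀ θ, γ θ ≠ 0 := fun θ h =>
    hp (dotProduct_self_eq_zero.mp (by rw [← hγγ θ, h, zero_dotProduct]))
  have hderiv : ∀ θ, HasDerivAt (f ∘ γ) 0 θ := fun θ => by
    have := (hf (γ θ)).hasFDerivAt.comp_hasDerivAt θ (hγ θ)
    rwa [hf' _ (hγ_ne θ) _ (hγγ' θ)] at this
  have := is_const_of_deriv_eq_zero (fun θ => (hderiv θ).differentiableAt)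
    (fun θ => (hderiv θ).deriv) Real.pi 0
  simpa [γ] using this

theorem exists_dotProduct_eq_zero_and_dotProduct_self_eq (p : Fin 3 → ℝ) :
    ∃ u, p ⬝ᵥ u = 0 ∧ u ⬝ᵥ u = p ⬝ᵥ p := by
  by_cases h01 : p 0 = 0 ∧ p 1 = 0
  · refine ⟨![p 2, 0, 0], ?_, ?_⟩ <;> simp [dotProduct, Fin.sum_univ_three, h01.1, h01.2]
  set r := p 0 ^ 2 + p 1 ^ 2
  have hr : 0 < r := by rcases not_and_or.mp h01 with h | h <;> positivity
  set s := Real.sqrt ((p ⬝ᵥ p) / r)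
  have hs : s ^ 2 * r = p ⬝ᵥ p := by
    rw [Real.sq_sqrt (div_nonneg (by simpa using dotProduct_star_self_nonneg p) hr.le),
      div_mul_cancel₀ _ hr.ne']
  refine ⟨s • ![-p 1, p 0, 0], ?_, ?_⟩
  · simp [dotProduct, Fin.sum_univ_three]; ring
  · simp [dotProduct, Fin.sum_univ_three] at hs ⊢
    linear_combination hs

namespace Phase

def partialX (f : Phase → ℝ) (z : Phase) (a : Fin 3) : ℝ := fderiv ℝ f z (Pi.single a 1, 0)

def partialP (f : Phase → ℝ) (z : Phase) (a : Fin 3) : ℝ := fderiv ℝ f z (0, Pi.single a 1)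

def position (a : Fin 3) : Phase → ℝ := fun w => w.1 a

def momentum (a : Fin 3) : Phase → ℝ := fun w => w.2 a

def angularMomentum (a b : Fin 3) : Phase → ℝ := fun w => w.1 a * w.2 b - w.1 b * w.2 a

theorem pb_eq_sum (f g : Phase → ℝ) (z : Phase) :
    pb f g z = ∑ a, (partialX f z a * partialP g z a - partialP f z a * partialX g z a) := rfl

theorem hasFDerivAt_position (a : Fin 3) (z : Phase) :
    HasFDerivAt (position a)
      ((ContinuousLinearMap.proj a).comp (ContinuousLinearMap.fst ℝ _ _)) z :=
  ((ContinuousLinearMap.proj a).comp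
    (ContinuousLinearMap.fst ℝ (Fin 3 → ℝ) (Fin 3 → ℝ))).hasFDerivAt

theorem hasFDerivAt_momentum (a : Fin 3) (z : Phase) :
    HasFDerivAt (momentum a)
      ((ContinuousLinearMap.proj a).comp (ContinuousLinearMap.snd ℝ _ _)) z :=
  ((ContinuousLinearMap.proj a).comp
    (ContinuousLinearMap.snd ℝ (Fin 3 → ℝ) (Fin 3 → ℝ))).hasFDerivAt

theorem differentiable_momentum (a : Fin 3) : Differentiable ℝ (momentum a) :=
  fun z => (hasFDerivAt_momentum a z).differentiableAt

theorem fderiv_momentum_apply (a : Fin 3) (z v : Phase) :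
    fderiv ℝ (momentum a) z v = v.2 a := by
  rw [(hasFDerivAt_momentum a z).fderiv]
  rfl

theorem fderiv_angularMomentum_apply (a b : Fin 3) (z v : Phase) :
    fderiv ℝ (angularMomentum a b) z v
      = v.1 a * z.2 b + z.1 a * v.2 b - (v.1 b * z.2 a + z.1 b * v.2 a) := by
  have h := (((hasFDerivAt_position a z).mul (hasFDerivAt_momentum b z)).sub
    ((hasFDerivAt_position b z).mul (hasFDerivAt_momentum a z))).fderiv
  rw [show angularMomentum a b = position a * momentum b - position b * momentum a from rfl, h]
  simp [position, momentum]
  ring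

theorem pb_momentum_left (a : Fin 3) (g : Phase → ℝ) (z : Phase) :
    pb (momentum a) g z = -partialX g z a := by
  simp [pb_eq_sum, partialX, partialP, fderiv_momentum_apply, Pi.single_apply]

theorem pb_momentum_momentum (a c : Fin 3) (z : Phase) :
    pb (momentum a) (momentum c) z = 0 := by
  simp [pb_momentum_left, partialX, fderiv_momentum_apply]

theorem pb_angularMomentum_left (a b : Fin 3) (g : Phase → ℝ) (z : Phase) :
    pb (angularMomentum a b) g z
      = z.2 b * partialP g z a - z.2 a * partialP g z b
        - (z.1 a * partialX g z b - z.1 b * partialX g z a) := by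
  simp [pb_eq_sum, partialX, partialP, fderiv_angularMomentum_apply, Pi.single_apply, sub_mul,
    ite_mul, Finset.sum_sub_distrib]

theorem pb_angularMomentum_momentum (a b c : Fin 3) (z : Phase) :
    pb (angularMomentum a b) (momentum c) z
      = (if a = c then z.2 b else 0) - (if b = c then z.2 a else 0) := by
  simp [pb_angularMomentum_left, partialX, partialP, fderiv_momentum_apply, Pi.single_apply,
    @eq_comm _ c]

theorem pb_mul_right (f : Phase → ℝ) {g h : Phase → ℝ} {z : Phase}
    (hg : DifferentiableAt ℝ g z) (hh : DifferentiableAt ℝ h z) :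
    pb f (fun w => g w * h w) z = pb f g z * h z + g z * pb f h z := by
  simp only [pb_eq_sum, partialX, partialP, fderiv_fun_mul hg hh, add_apply, smul_apply,
    smul_eq_mul, Finset.sum_mul, Finset.mul_sum, ← Finset.sum_add_distrib]
  exact Finset.sum_congr rfl fun a _ => by ring

theorem pb_sum_right (f : Phase → ℝ) {ι : Type*} (s : Finset ι) {g : ι → Phase → ℝ}
    {z : Phase} (hg : ∀ i ∈ s, DifferentiableAt ℝ (g i) z) :
    pb f (fun w => ∑ i ∈ s, g i w) z = ∑ i ∈ s, pb f (g i) z := by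
  simp only [pb_eq_sum, partialX, partialP, fderiv_fun_sum hg, sum_apply, Finset.mul_sum,
    ← Finset.sum_sub_distrib]
  exact Finset.sum_comm

def dotMomentum (A : Phase → Fin 3 → ℝ) : Phase → ℝ := fun w => ∑ c, A w c * w.2 c

theorem pb_dotMomentum {A : Phase → Fin 3 → ℝ} (hA : ∀ c, Differentiable ℝ fun w => A w c)
    (f : Phase → ℝ) (z : Phase) :
    pb f (dotMomentum A) z
      = ∑ c, (pb f (fun w => A w c) z * z.2 c + A z c * pb f (momentum c) z) := by
  rw [show dotMomentum A = fun w => ∑ c, A w c * momentum c w from rfl,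
    pb_sum_right f (g := fun c w => A w c * momentum c w) _
      fun c _ => (hA c z).mul (differentiable_momentum c z)]
  exact Finset.sum_congr rfl fun c _ => pb_mul_right f (hA c z) (differentiable_momentum c z)

theorem pb_momentum_dotMomentum_eq_zero {A : Phase → Fin 3 → ℝ}
    (hA : ∀ c, Differentiable ℝ fun w => A w c)
    (htrans : ∀ a c z, pb (momentum a) (fun w => A w c) z = 0) (a : Fin 3) (z : Phase) :
    pb (momentum a) (dotMomentum A) z = 0 := by
  simp [pb_dotMomentum hA, htrans, pb_momentum_momentum]

theorem pb_angularMomentum_dotMomentum_eq_zero {A : Phase → Fin 3 → ℝ}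
    (hA : ∀ c, Differentiable ℝ fun w => A w c)
    (hrot : ∀ a b c z, pb (angularMomentum a b) (fun w => A w c) z
      = (if a = c then A z b else 0) - (if b = c then A z a else 0))
    (a b : Fin 3) (z : Phase) :
    pb (angularMomentum a b) (dotMomentum A) z = 0 := by
  simp [pb_dotMomentum hA, hrot, pb_angularMomentum_momentum, sub_mul, mul_sub, ite_mul, mul_ite,
    Finset.sum_add_distrib, Finset.sum_sub_distrib]

theorem apply_neg_momentum_eq {S : Phase → ℝ} (hS : Differentiable ℝ S)
    (htrans : ∀ a z, pb (momentum a) S z = 0) (hrot : ∀ a b z, pb (angularMomentum a b) S z = 0)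
    (x p : Fin 3 → ℝ) : S (x, -p) = S (x, p) := by
  have hX : ∀ z a, partialX S z a = 0 := fun z a => by
    simpa [pb_momentum_left] using htrans a z
  have hP : ∀ q a b, q b * partialP S (x, q) a = q a * partialP S (x, q) b := fun q a b => by
    have := hrot a b (x, q)
    rw [pb_angularMomentum_left, hX, hX] at this
    linarith
  have hfderiv : ∀ q v, fderiv ℝ (fun q => S (x, q)) q v = fderiv ℝ S (x, q) (0, v) :=
    fun q v => by
      have h : HasFDerivAt (fun q => S (x, q)) _ q :=
        (hS (x, q)).hasFDerivAt.comp q (hasFDerivAt_prodMk_right x q)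
      rw [h.fderiv]
      rfl
  obtain ⟨u, hpu, huu⟩ := exists_dotProduct_eq_zero_and_dotProduct_self_eq p
  refine apply_neg_eq_of_fderiv_orthogonal_eq_zero (f := fun q => S (x, q)) (by fun_prop)
    (fun q hq v hv => ?_) hpu huu
  rw [hfderiv]
  exact LinearMap.apply_eq_zero_of_dotProduct_eq_zero
    ((fderiv ℝ S (x, q)).toLinearMap.comp (LinearMap.inr ℝ _ _)) (hP q) hq hv

end Phase

/-- **A translation-invariant, rotation-covariant, time-reversal-invariant vector observable has
no component along the momentum (spin-zero case)**: such a `C¹` map `A : ℝ³ × ℝ³ → ℝ³` satisfies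
`A(x,p) · p = 0` everywhere. -/
theorem invariant_vector_orthogonal_to_momentum
    (A : Phase → Fin 3 → ℝ) (hC1 : ContDiff ℝ 1 A)
    (htrans : ∀ a b : Fin 3, ∀ z : Phase, pb (fun w => w.2 a) (fun w => A w b) z = 0)
    (hrot : ∀ a b c : Fin 3, ∀ z : Phase,
      pb (fun w => w.1 a * w.2 b - w.1 b * w.2 a) (fun w => A w c) z
        = (if a = c then A z b else 0) - (if b = c then A z a else 0))
    (hT : ∀ x p : Fin 3 → ℝ, A (x, -p) = A (x, p)) :
    ∀ z : Phase, ∑ a, A z a * z.2 a = 0 := by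
  have hA : ∀ c, Differentiable ℝ fun w => A w c :=
    differentiable_pi.mp (hC1.differentiable one_ne_zero)
  rintro ⟨x, p⟩
  have heven : Phase.dotMomentum A (x, -p) = Phase.dotMomentum A (x, p) :=
    Phase.apply_neg_momentum_eq (by unfold Phase.dotMomentum; fun_prop)
      (Phase.pb_momentum_dotMomentum_eq_zero hA htrans)
      (Phase.pb_angularMomentum_dotMomentum_eq_zero hA hrot) x p
  have hodd : Phase.dotMomentum A (x, -p) = -Phase.dotMomentum A (x, p) := by
    simp [Phase.dotMomentum, hT]
  show Phase.dotMomentum A (x, p) = 0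
  linarith
end
end

section
/- Decomposition of a rotation-equivariant vector observable orthogonal to the momentum: Let S > 0 and 𝕊²_S := {s ∈ ℝ³ : |s| = S}. Let A : (ℝ³ \ {0}) × 𝕊²_S → ℝ³ be C¹ with A(Rp, Rs) = R·A(p,s) for every R ∈ SO(3) (A transforms as a vector under rotations; translation invariance is expressed by A not depending on position) and A(p,s) · p = 0 for all (p,s). Then there exist C¹ functions B, C : (0,∞) × (−S, S) → ℝ such that A(p,s) = B(|p|, p̂·s) (p̂ × s) + C(|p|, p̂·s) (p̂ × (p̂ × s)) for all (p,s) with s not parallel to p̂, where p̂ := p/|p| and × is the vector product on ℝ³. -/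
noncomputable section

open scoped BigOperators

/-- The Euclidean norm on `ℝ³` (modelled as `Fin 3 → ℝ`). -/
def norm3 (v : Fin 3 → ℝ) : ℝ := Real.sqrt (∑ a, v a ^ 2)

/-- The Euclidean scalar product on `ℝ³`. -/
def dot3 (v w : Fin 3 → ℝ) : ℝ := ∑ a, v a * w a

open Matrix

lemma dot3_comm' (v w : Fin 3 → ℝ) : dot3 v w = dot3 w v := by
  simp [dot3, mul_comm]

lemma norm3_sq' (v : Fin 3 → ℝ) : (norm3 v)^2 = dot3 v v := by
  rw [norm3, Real.sq_sqrt (by positivity)]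
  simp [dot3, sq]

lemma cross_cross3 (a b c : Fin 3 → ℝ) :
    a ⨯₃ (b ⨯₃ c) = dot3 a c • b - dot3 a b • c := by
  funext i
  fin_cases i <;>
    simp [cross_apply, dot3, Fin.sum_univ_three] <;> ring

lemma lagrange3 (a b : Fin 3 → ℝ) :
    dot3 (a ⨯₃ b) (a ⨯₃ b) = dot3 a a * dot3 b b - (dot3 a b)^2 := by
  simp [cross_apply, dot3, Fin.sum_univ_three]; ring

lemma dot3_self_nonneg (v : Fin 3 → ℝ) : 0 ≤ dot3 v v :=
  Finset.sum_nonneg fun j _ => mul_self_nonneg (v j)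

lemma dot3_self_pos (v : Fin 3 → ℝ) (hv : v ≠ 0) : 0 < dot3 v v := by
  rcases (dot3_self_nonneg v).lt_or_eq with h | h
  · exact h
  · exfalso; apply hv; funext i
    have : ∀ j ∈ Finset.univ, v j * v j = 0 := by
      intro j _
      have := Finset.sum_eq_zero_iff_of_nonneg (f := fun j => v j * v j)
        (fun j _ => mul_self_nonneg (v j)) |>.mp h.symm
      exact this j (Finset.mem_univ j)
    have := this i (Finset.mem_univ i)
    exact mul_self_eq_zero.mp this

lemma dot3_smul_left (a : ℝ) (v w : Fin 3 → ℝ) : dot3 (a • v) w = a * dot3 v w := by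
  simp [dot3, Finset.mul_sum, mul_assoc]

lemma dot3_smul_right (a : ℝ) (v w : Fin 3 → ℝ) : dot3 v (a • w) = a * dot3 v w := by
  simp only [dot3, Pi.smul_apply, smul_eq_mul, Finset.mul_sum]
  exact Finset.sum_congr rfl fun i _ => by ring

lemma dot3_sub_left (u v w : Fin 3 → ℝ) : dot3 (u - v) w = dot3 u w - dot3 v w := by
  simp [dot3, sub_mul, Finset.sum_sub_distrib]

lemma dot3_sub_right (u v w : Fin 3 → ℝ) : dot3 u (v - w) = dot3 u v - dot3 u w := by
  simp [dot3, mul_sub, Finset.sum_sub_distrib]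

lemma dot3_cross_left (a b : Fin 3 → ℝ) : dot3 a (a ⨯₃ b) = 0 := by
  simp [cross_apply, dot3, Fin.sum_univ_three]; ring

lemma dot3_cross_right (a b : Fin 3 → ℝ) : dot3 b (a ⨯₃ b) = 0 := by
  simp [cross_apply, dot3, Fin.sum_univ_three]; ring

/-- **Decomposition of a rotation-equivariant vector observable orthogonal to the momentum**:
a `C¹` map `A : (ℝ³∖{0}) × 𝕊²_S → ℝ³` that transforms as a vector under the diagonal `SO(3)`
action and satisfies `A(p,s)·p = 0` has the form
`A(p,s) = B(|p|, p̂·s) (p̂ × s) + C(|p|, p̂·s) (p̂ × (p̂ × s))` away from `s ∥ p̂`,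
for `C¹` functions `B, C` on `(0,∞) × (−S,S)`. -/
theorem equivariant_vector_decomposition
    (S : ℝ) (hS : 0 < S)
    (A : (Fin 3 → ℝ) → (Fin 3 → ℝ) → Fin 3 → ℝ)
    (hC1 : ContDiffOn ℝ 1 (fun z : (Fin 3 → ℝ) × (Fin 3 → ℝ) => A z.1 z.2)
      {z : (Fin 3 → ℝ) × (Fin 3 → ℝ) | z.1 ≠ 0 ∧ norm3 z.2 = S})
    (hrot : ∀ R : Matrix (Fin 3) (Fin 3) ℝ, R * R.transpose = 1 → R.det = 1 →
      ∀ p s : Fin 3 → ℝ, p ≠ 0 → norm3 s = S →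
        A (R.mulVec p) (R.mulVec s) = R.mulVec (A p s))
    (horth : ∀ p s : Fin 3 → ℝ, p ≠ 0 → norm3 s = S → dot3 (A p s) p = 0) :
    ∃ B C : ℝ → ℝ → ℝ,
      ContDiffOn ℝ 1 (fun q : ℝ × ℝ => B q.1 q.2) (Set.Ioi 0 ×ˢ Set.Ioo (-S) S) ∧
      ContDiffOn ℝ 1 (fun q : ℝ × ℝ => C q.1 q.2) (Set.Ioi 0 ×ˢ Set.Ioo (-S) S) ∧
      ∀ p s : Fin 3 → ℝ, p ≠ 0 → norm3 s = S →
        s ∉ Submodule.span ℝ ({p} : Set (Fin 3 → ℝ)) →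
        A p s
          = B (norm3 p) (dot3 p s / norm3 p)
              • crossProduct ((norm3 p)⁻¹ • p) s
            + C (norm3 p) (dot3 p s / norm3 p)
              • crossProduct ((norm3 p)⁻¹ • p) (crossProduct ((norm3 p)⁻¹ • p) s) := by
  classical
  -- `C¹` regularity of the canonical-frame components of `A`
  have key : ∀ i : Fin 3, ContDiffOn ℝ 1
      (fun q : ℝ × ℝ => A ![0,0,q.1] ![Real.sqrt (S^2 - q.2^2), 0, q.2] i)
      (Set.Ioi 0 ×ˢ Set.Ioo (-S) S) := by
    intro i
    set D : Set (ℝ × ℝ) := Set.Ioi 0 ×ˢ Set.Ioo (-S) S with hD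
    have hpos : ∀ q ∈ D, 0 < S^2 - q.2^2 := by
      intro q hq
      have h2 : q.2 ∈ Set.Ioo (-S) S := hq.2
      have : |q.2| < S := abs_lt.2 ⟨h2.1, h2.2⟩
      nlinarith [abs_nonneg q.2, sq_abs q.2]
    have hsqrt : ContDiffOn ℝ 1 (fun q : ℝ × ℝ => Real.sqrt (S^2 - q.2^2)) D := by
      apply ContDiffOn.sqrt
      · exact (contDiff_const.sub (contDiff_snd.pow 2)).contDiffOn
      · exact fun q hq => (hpos q hq).ne'
    have hΦ : ContDiffOn ℝ 1
        (fun q : ℝ × ℝ => ((![0,0,q.1] : Fin 3 → ℝ),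
          (![Real.sqrt (S^2 - q.2^2), 0, q.2] : Fin 3 → ℝ))) D := by
      apply ContDiffOn.prodMk
      · apply contDiffOn_pi.2
        intro j
        fin_cases j <;> simp <;>
          first
            | exact contDiffOn_const
            | exact contDiff_fst.contDiffOn
      · apply contDiffOn_pi.2
        intro j
        fin_cases j <;> simp
        · exact hsqrt
        · exact contDiffOn_const
        · exact contDiff_snd.contDiffOn
    have hmaps : Set.MapsTo
        (fun q : ℝ × ℝ => ((![0,0,q.1] : Fin 3 → ℝ),
          (![Real.sqrt (S^2 - q.2^2), 0, q.2] : Fin 3 → ℝ)))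
        D {z : (Fin 3 → ℝ) × (Fin 3 → ℝ) | z.1 ≠ 0 ∧ norm3 z.2 = S} := by
      intro q hq
      have h1 : (0:ℝ) < q.1 := hq.1
      constructor
      · intro h
        have := congrFun h 2
        simp at this
        exact h1.ne' this
      · have hx : Real.sqrt (S^2 - q.2^2) ^ 2 = S^2 - q.2^2 :=
          Real.sq_sqrt (hpos q hq).le
        simp only [norm3, Fin.sum_univ_three]
        simp [hx]
        exact Real.sqrt_sq hS.le
    have hcomp := (hC1.comp hΦ hmaps)
    exact ((ContinuousLinearMap.proj i : (Fin 3 → ℝ) →L[ℝ] ℝ).contDiff).comp_contDiffOn hcomp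
  have hsqrt_ne : ∀ q : ℝ × ℝ, q ∈ Set.Ioi (0:ℝ) ×ˢ Set.Ioo (-S) S →
      Real.sqrt (S^2 - q.2^2) ≠ 0 := by
    intro q hq
    have h2 : q.2 ∈ Set.Ioo (-S) S := hq.2
    have : |q.2| < S := abs_lt.2 ⟨h2.1, h2.2⟩
    have hp : 0 < S^2 - q.2^2 := by nlinarith [abs_nonneg q.2, sq_abs q.2]
    exact (Real.sqrt_pos.2 hp).ne'
  have hinner : ∀ q : ℝ × ℝ, q ∈ Set.Ioi (0:ℝ) ×ˢ Set.Ioo (-S) S →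
      S^2 - q.2^2 ≠ 0 := by
    intro q hq
    have h2 : q.2 ∈ Set.Ioo (-S) S := hq.2
    have : |q.2| < S := abs_lt.2 ⟨h2.1, h2.2⟩
    nlinarith [abs_nonneg q.2, sq_abs q.2]
  refine ⟨fun r c => A ![0,0,r] ![Real.sqrt (S^2 - c^2), 0, c] 1 / Real.sqrt (S^2 - c^2),
          fun r c => -(A ![0,0,r] ![Real.sqrt (S^2 - c^2), 0, c] 0) / Real.sqrt (S^2 - c^2),
          ?_, ?_, ?_⟩
  · exact (key 1).div
      ((contDiff_const.sub (contDiff_snd.pow 2)).contDiffOn.sqrt hinner) hsqrt_ne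
  · exact ((key 0).neg).div
      ((contDiff_const.sub (contDiff_snd.pow 2)).contDiffOn.sqrt hinner) hsqrt_ne
  -- main geometric identity
  intro p s hp hs hspan
  set r : ℝ := norm3 p with hrdef
  have hr2 : r^2 = dot3 p p := norm3_sq' p
  have hppos : 0 < dot3 p p := dot3_self_pos p hp
  have hrnn : 0 ≤ r := Real.sqrt_nonneg _
  have hr : 0 < r := by nlinarith
  set c : ℝ := dot3 p s / r with hcdef
  set w : Fin 3 → ℝ := r⁻¹ • p with hwdef
  have hww : dot3 w w = 1 := by
    rw [hwdef, dot3_smul_left, dot3_smul_right, ← hr2]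
    field_simp
  have hws : dot3 w s = c := by
    rw [hwdef, dot3_smul_left, hcdef]
    field_simp [mul_comm]
  have hss : dot3 s s = S^2 := by
    rw [← norm3_sq' s, hs]
  -- s not parallel to p gives |c| < S
  have hx2 : 0 < S^2 - c^2 := by
    have ht : w ⨯₃ s ≠ 0 := by
      intro h0
      apply hspan
      have h1 := cross_cross3 w w s
      rw [h0] at h1
      have h2 : (0 : Fin 3 → ℝ) = dot3 w s • w - dot3 w w • s := by
        rw [← h1]; simp
      rw [hws, hww, one_smul] at h2
      have hseq : s = c • w := (sub_eq_zero.mp h2.symm).symm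
      rw [Submodule.mem_span_singleton]
      exact ⟨c * r⁻¹, by rw [hseq, hwdef, smul_smul]⟩
    have hpos := dot3_self_pos _ ht
    have := lagrange3 w s
    rw [hww, hss, hws, one_mul] at this
    linarith [this ▸ hpos]
  set x : ℝ := Real.sqrt (S^2 - c^2) with hxdef
  have hx : 0 < x := Real.sqrt_pos.2 hx2
  have hxx : x^2 = S^2 - c^2 := Real.sq_sqrt hx2.le
  set u : Fin 3 → ℝ := x⁻¹ • (s - c • w) with hudef
  set v : Fin 3 → ℝ := w ⨯₃ u with hvdef
  have hwu : dot3 w u = 0 := by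
    rw [hudef, dot3_smul_right, dot3_sub_right, dot3_smul_right, hws, hww]
    ring
  have hd : dot3 (s - c • w) (s - c • w) = S^2 - c^2 := by
    simp only [dot3_sub_left, dot3_sub_right, dot3_smul_left, dot3_smul_right]
    rw [hss, hww, hws, dot3_comm' s w, hws]
    ring
  have huu : dot3 u u = 1 := by
    rw [hudef, dot3_smul_left, dot3_smul_right, hd, ← hxx]
    field_simp
  have hvv : dot3 v v = 1 := by
    rw [hvdef, lagrange3, hww, huu, hwu]; ring
  have hwv : dot3 w v = 0 := by rw [hvdef]; exact dot3_cross_left w u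
  have huv : dot3 u v = 0 := by rw [hvdef]; exact dot3_cross_right w u
  -- the rotation matrix with columns u, v, w
  set R : Matrix (Fin 3) (Fin 3) ℝ := Matrix.of fun i j => ![u, v, w] j i with hRdef
  have euu : u 0 * u 0 + u 1 * u 1 + u 2 * u 2 = 1 := by
    simpa [dot3, Fin.sum_univ_three] using huu
  have evv : v 0 * v 0 + v 1 * v 1 + v 2 * v 2 = 1 := by
    simpa [dot3, Fin.sum_univ_three] using hvv
  have eww : w 0 * w 0 + w 1 * w 1 + w 2 * w 2 = 1 := by
    simpa [dot3, Fin.sum_univ_three] using hww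
  have ewu : w 0 * u 0 + w 1 * u 1 + w 2 * u 2 = 0 := by
    simpa [dot3, Fin.sum_univ_three] using hwu
  have ewv : w 0 * v 0 + w 1 * v 1 + w 2 * v 2 = 0 := by
    simpa [dot3, Fin.sum_univ_three] using hwv
  have euv : u 0 * v 0 + u 1 * v 1 + u 2 * v 2 = 0 := by
    simpa [dot3, Fin.sum_univ_three] using huv
  have hR1 : R * R.transpose = 1 := by
    rw [mul_eq_one_comm]
    ext i j
    fin_cases i <;> fin_cases j <;>
      simp [hRdef, Matrix.mul_apply, Fin.sum_univ_three, Matrix.one_apply] <;>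
      first
        | linear_combination euu
        | linear_combination evv
        | linear_combination eww
        | linear_combination ewu
        | linear_combination ewv
        | linear_combination euv
  have hv0 : v 0 = w 1 * u 2 - w 2 * u 1 := by rw [hvdef, cross_apply]; simp
  have hv1 : v 1 = w 2 * u 0 - w 0 * u 2 := by rw [hvdef, cross_apply]; simp
  have hv2 : v 2 = w 0 * u 1 - w 1 * u 0 := by rw [hvdef, cross_apply]; simp
  have hdet : R.det = 1 := by
    have h : R.det = dot3 v v := by
      simp only [hRdef, Matrix.det_fin_three, Matrix.of_apply, dot3, Fin.sum_univ_three]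
      simp [hv0, hv1, hv2]
      ring
    rw [h, hvv]
  have hp0 : (![0,0,r] : Fin 3 → ℝ) ≠ 0 := by
    intro h
    have := congrFun h 2
    simp at this
    exact hr.ne' this
  have hs0 : norm3 (![x, 0, c] : Fin 3 → ℝ) = S := by
    simp only [norm3, Fin.sum_univ_three]
    simp [hxx]
    exact Real.sqrt_sq hS.le
  have hmul_p : R.mulVec ![0,0,r] = p := by
    funext i
    simp [hRdef, Matrix.mulVec, dotProduct, Fin.sum_univ_three, hwdef]
    field_simp
  have hmul_s : R.mulVec ![x, 0, c] = s := by
    funext i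
    simp [hRdef, Matrix.mulVec, dotProduct, Fin.sum_univ_three, hudef]
    field_simp
    ring
  have heq := hrot R hR1 hdet ![0,0,r] ![x,0,c] hp0 hs0
  rw [hmul_p, hmul_s] at heq
  set a : Fin 3 → ℝ := A ![0,0,r] ![x,0,c] with hadef
  have ha2 : a 2 = 0 := by
    have h := horth ![0,0,r] ![x,0,c] hp0 hs0
    simp [dot3, Fin.sum_univ_three, ← hadef] at h
    rcases h with h | h
    · exact h
    · exact absurd h hr.ne'
  -- decomposition of s and the cross products
  have hsdecomp : s = x • u + c • w := by
    have hxu : x • u = s - c • w := by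
      rw [hudef, smul_smul, mul_inv_cancel₀ hx.ne', one_smul]
    rw [hxu]; abel
  have hcs : w ⨯₃ s = x • v := by
    calc w ⨯₃ s = w ⨯₃ (x • u + c • w) := by rw [← hsdecomp]
    _ = x • (w ⨯₃ u) + c • (w ⨯₃ w) := by
        rw [map_add]
        simp only [_root_.map_smul]
    _ = x • v := by rw [cross_self, hvdef]; simp
  have hccs : w ⨯₃ (w ⨯₃ s) = (-x) • u := by
    rw [hcs, _root_.map_smul, hvdef, cross_cross3, hwu, hww]
    funext i
    simp <;> ring
  -- finish
  rw [heq]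
  have hBc : Real.sqrt (S ^ 2 - (dot3 p s / norm3 p) ^ 2) = x := by
    rw [hxdef, hcdef, hrdef]
  have hmulvec : R.mulVec a = a 0 • u + a 1 • v := by
    funext i
    simp [hRdef, Matrix.mulVec, dotProduct, Fin.sum_univ_three, ha2]
    ring
  rw [hmulvec]
  show _ = (A ![0,0,(norm3 p)] ![Real.sqrt (S^2 - (dot3 p s / norm3 p)^2), 0,
      (dot3 p s / norm3 p)] 1 / Real.sqrt (S^2 - (dot3 p s / norm3 p)^2)) • (w ⨯₃ s)
    + (-(A ![0,0,(norm3 p)] ![Real.sqrt (S^2 - (dot3 p s / norm3 p)^2), 0,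
      (dot3 p s / norm3 p)] 0) / Real.sqrt (S^2 - (dot3 p s / norm3 p)^2)) • (w ⨯₃ (w ⨯₃ s))
  rw [hBc, hccs, hcs, ← hrdef, ← hcdef, ← hadef]
  funext i
  simp only [Pi.add_apply, Pi.smul_apply, smul_eq_mul, Pi.neg_apply]
  field_simp
  ring
end
end
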